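/- arXiv:2506.11318 — 9 statements merged into one kernel-verified Lean document; each statement's English description precedes it below -/
import Mathlib

section
/- Let T be a string with suffix array SA, let A be a string, and let [ℓ, r) be the suffix range of A in T. For each i in [ℓ, r) with SA[i] + |A| < |T|, let f(i) be the suffix-array position of the suffix T_{SA[i]+|A|}. Then f is strictly increasing on the set of such i, i.e., for ℓ ≤ i < j < r with both defined, f(i) < f(j). -/
/-!
Every suffix in the suffix range of `A` starts with `A`, and stripping this common prefix
preserves the lexicographic order of two suffixes. Hence the suffixes starting `|A|` positions
later are in the same order as the original ones, and since the suffix array lists suffixes in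
strictly increasing order, their ranks are in the same order too.
-/

namespace List

variable {α : Type*} {r : α → α → Prop}

theorem lex_append_left_iff [Std.Irrefl r] (c : List α) {x y : List α} :
    Lex r (c ++ x) (c ++ y) ↔ Lex r x y := by
  induction c with
  | nil => rfl
  | cons a c ih => simpa [lex_cons_iff, irrefl a] using ih

theorem Lex.drop_length_of_isPrefix [Std.Irrefl r] {A s t : List α} (hs : A <+: s)
    (ht : A <+: t) (h : Lex r s t) : Lex r (s.drop A.length) (t.drop A.length) := by
  rw [← prefix_iff_eq_append.1 hs, ← prefix_iff_eq_append.1 ht, lex_append_left_iff] at h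
  exact h

end List

def IsSuffixArray {α : Type*} [LT α] (T : List α) (SA : Equiv.Perm (Fin T.length)) : Prop :=
  ∀ i j : Fin T.length, i < j → List.Lex (· < ·) (T.drop (SA i)) (T.drop (SA j))

theorem IsSuffixArray.lt_of_lex_drop {α : Type*} [LinearOrder α] {T : List α}
    {SA : Equiv.Perm (Fin T.length)} (hSA : IsSuffixArray T SA) {u v : Fin T.length}
    (h : List.Lex (· < ·) (T.drop (SA u)) (T.drop (SA v))) : u < v := by
  rcases lt_trichotomy u v with huv | rfl | hvu
  · exact huv
  · exact absurd h (irrefl _)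
  · exact absurd (hSA v u hvu) (asymm h)

theorem stmt5 {α : Type*} [LinearOrder α] (T A : List α)
    (SA : Equiv.Perm (Fin T.length))
    (hsorted : ∀ i j : Fin T.length, i < j →
      List.Lex (· < ·) (T.drop (SA i).val) (T.drop (SA j).val))
    (ℓ r : ℕ)
    (hrange : ∀ i : Fin T.length, (A <+: T.drop (SA i).val) ↔ (ℓ ≤ i.val ∧ i.val < r))
    (i j : Fin T.length) (hi : ℓ ≤ i.val) (hij : i < j) (hj : j.val < r)
    (hi' : (SA i).val + A.length < T.length) (hj' : (SA j).val + A.length < T.length) :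
    SA.symm ⟨(SA i).val + A.length, hi'⟩ < SA.symm ⟨(SA j).val + A.length, hj'⟩ := by
  have hAi : A <+: T.drop (SA i) := (hrange i).2 ⟨hi, (Fin.lt_def.1 hij).trans hj⟩
  have hAj : A <+: T.drop (SA j) := (hrange j).2 ⟨hi.trans hij.le, hj⟩
  apply IsSuffixArray.lt_of_lex_drop hsorted
  simp only [Equiv.apply_symm_apply, ← List.drop_drop]
  exact (hsorted i j hij).drop_length_of_isPrefix hAi hAj
end

section
/- Let T be a string with suffix array SA. For strings A and B, a position i in the suffix range of A satisfies: A∘B is a prefix of T_{SA[i]} if and only if SA[i] + |A| + |B| ≤ |T| and the suffix T_{SA[i]+|A|} lies (via the inverse suffix array) in the suffix range of B. Consequently, the suffix range of A∘B equals {i in SR(A) : SA[i]+|A| < |T| and ISA[SA[i]+|A|] ∈ SR(B)} when B is nonempty. -/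
theorem stmt6 {α : Type*} [LinearOrder α] (T A B : List α)
    (SA : Equiv.Perm (Fin T.length))
    (hsorted : ∀ i j : Fin T.length, i < j →
      List.Lex (· < ·) (T.drop (SA i).val) (T.drop (SA j).val))
    (hB : B ≠ []) (i : Fin T.length) (hA : A <+: T.drop (SA i).val) :
    ((A ++ B) <+: T.drop (SA i).val) ↔
      ((SA i).val + A.length + B.length ≤ T.length ∧
        B <+: T.drop ((SA i).val + A.length)) := by
  obtain ⟨s, hs⟩ := hA
  have hdrop : T.drop ((SA i).val + A.length) = s := by
    rw [← List.drop_drop, ← hs, List.drop_left]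
  have hlen : s.length = T.length - ((SA i).val + A.length) := by
    have := congrArg List.length hdrop
    simpa [List.length_drop] using this.symm
  constructor
  · rintro ⟨t, ht⟩
    rw [← hs, List.append_assoc] at ht
    have hBs : B <+: s := ⟨t, List.append_cancel_left ht⟩
    refine ⟨?_, hdrop ▸ hBs⟩
    have hb := hBs.length_le
    rw [hlen] at hb
    have hsa : (SA i).val + A.length ≤ T.length := by
      have := congrArg List.length hs
      simp [List.length_drop, List.length_append] at this
      omega
    omega
  · rintro ⟨_, hBs⟩
    rw [hdrop] at hBs
    obtain ⟨t, ht⟩ := hBs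
    exact ⟨t, by rw [← hs, List.append_assoc, ht]⟩
end

section
/- Let T be a string with suffix array SA and inverse ISA. Suppose a pattern P occurs in T, with suffix range [ℓ, r), and let 0 < k < |P|. If i ∈ [ℓ, r), then ISA[SA[i] + k] belongs to the suffix range of P', where P' is P with its first k characters removed. -/
theorem stmt9 {α : Type*} [LinearOrder α] (T P : List α)
    (SA : Equiv.Perm (Fin T.length))
    (hsorted : ∀ i j : Fin T.length, i < j →
      List.Lex (· < ·) (T.drop (SA i).val) (T.drop (SA j).val))
    (ℓ r : ℕ)
    (hrange : ∀ idx : Fin T.length,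
      (P <+: T.drop (SA idx).val) ↔ (ℓ ≤ idx.val ∧ idx.val < r))
    (k : ℕ) (hk0 : 0 < k) (hk : k < P.length)
    (i : Fin T.length) (hi : ℓ ≤ i.val ∧ i.val < r)
    (h' : (SA i).val + k < T.length) :
    P.drop k <+: T.drop (SA (SA.symm ⟨(SA i).val + k, h'⟩)).val := by
  rw [Equiv.apply_symm_apply]
  have hp : P <+: T.drop (SA i).val := (hrange i).mpr hi
  have := hp.drop k
  simpa [List.drop_drop, Nat.add_comm] using this
end

section
/- Define an occurrence partition of a pattern P with respect to a text T as a sequence (P₁, …, P_k) of nonempty strings with P = P₁∘…∘P_k such that each P_i either occurs as a substring of T or has length 1, and for each i < k the concatenation P_i∘P_{i+1} does not occur in T. Assuming every character of P occurs in T: P occurs in T if and only if every occurrence partition of P has size one. -/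
/-- An occurrence partition of a pattern with respect to a text `T`:
nonempty pieces, each occurring in `T` as a contiguous substring or of length 1,
with no two adjacent pieces whose concatenation occurs in `T`. -/
def IsOccPartition {α : Type*} (T : List α) (L : List (List α)) : Prop :=
  (∀ Q ∈ L, Q ≠ []) ∧ (∀ Q ∈ L, Q <:+: T ∨ Q.length = 1) ∧
  ∀ i : ℕ, (h : i + 1 < L.length) →
    ¬ ((L.get ⟨i, Nat.lt_of_succ_lt h⟩ ++ L.get ⟨i + 1, h⟩) <:+: T)

namespace IsOccPartition

variable {α : Type*} {T : List α}

theorem iff_isChain {L : List (List α)} :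
    IsOccPartition T L ↔ (∀ Q ∈ L, Q ≠ []) ∧ (∀ Q ∈ L, Q <:+: T ∨ Q.length = 1) ∧
      L.IsChain (fun A B => ¬ (A ++ B) <:+: T) := by
  rw [IsOccPartition, List.isChain_iff_getElem]
  exact and_congr_right fun _ => and_congr_right fun _ =>
    ⟨fun h i hi => h i (by omega), fun h i hi => h i (by omega)⟩

theorem nil : IsOccPartition T [] := by
  simp [iff_isChain]

theorem cons_iff {Q : List α} {L : List (List α)} :
    IsOccPartition T (Q :: L) ↔ Q ≠ [] ∧ (Q <:+: T ∨ Q.length = 1) ∧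
      (∀ R ∈ L.head?, ¬ (Q ++ R) <:+: T) ∧ IsOccPartition T L := by
  simp only [iff_isChain, List.mem_cons, forall_eq_or_imp, List.isChain_cons]
  tauto

theorem length_le_one_of_flatten_infix {L : List (List α)} (hL : IsOccPartition T L)
    (hflat : L.flatten <:+: T) : L.length ≤ 1 := by
  match L, hL with
  | [], _ | [_], _ => simp
  | A :: B :: M, hL =>
    refine absurd (List.IsInfix.trans ?_ hflat) ((cons_iff.1 hL).2.2.1 B rfl)
    simpa [← List.append_assoc] using (List.prefix_append (A ++ B) M.flatten).isInfix

theorem exists_flatten_eq (P : List α) : ∃ L, IsOccPartition T L ∧ L.flatten = P := by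
  induction P with
  | nil => exact ⟨[], nil, rfl⟩
  | cons c P ih =>
    obtain ⟨L, hL, rfl⟩ := ih
    match L, hL with
    | [], _ => exact ⟨[[c]], cons_iff.2 ⟨by simp, by simp, by simp, nil⟩, rfl⟩
    | Q :: M, hL =>
      obtain ⟨-, -, hQM, hM⟩ := cons_iff.1 hL
      by_cases hcQ : (c :: Q) <:+: T
      · refine ⟨(c :: Q) :: M, cons_iff.2 ⟨by simp, .inl hcQ, ?_, hM⟩, rfl⟩
        exact fun R hR hcQR => hQM R hR ((List.suffix_cons c (Q ++ R)).isInfix.trans hcQR)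
      · exact ⟨[c] :: Q :: M, cons_iff.2 ⟨by simp, by simp, by simpa using hcQ, hL⟩, rfl⟩

end IsOccPartition

theorem stmt10 {α : Type*} (T P : List α) (hP : P ≠ [])
    (hchar : ∀ c ∈ P, [c] <:+: T) :
    (P <:+: T) ↔
      ∀ L : List (List α), IsOccPartition T L → L.flatten = P → L.length = 1 := by
  constructor
  · rintro hPT L hL rfl
    have hL_ne : L ≠ [] := by rintro rfl; exact hP rfl
    have := hL.length_le_one_of_flatten_infix hPT
    have := List.length_pos_iff.2 hL_ne
    omega
  · intro hall
    obtain ⟨L, hL, rfl⟩ := IsOccPartition.exists_flatten_eq (T := T) P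
    obtain ⟨Q, rfl⟩ := List.length_eq_one_iff.1 (hall L hL rfl)
    simp only [List.flatten_cons, List.flatten_nil, List.append_nil] at hchar ⊢
    rcases (IsOccPartition.cons_iff.1 hL).2.1 with hQ | hQ
    · exact hQ
    · obtain ⟨c, rfl⟩ := List.length_eq_one_iff.1 hQ
      exact hchar c (List.mem_singleton_self c)
end

section
/- Any two occurrence partitions of the same nonempty pattern P with respect to a text T, both satisfying the maximality property, have sizes that differ by a bounded argument: in particular, the greedy partition obtained by repeatedly taking the longest prefix of the remaining pattern that occurs in T (or a single character if none occurs) is an occurrence partition of minimum size. -/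
/-!
Greedy stays ahead. If the pieces of a maximal partition `L` concatenate to a suffix of the
concatenation of the pieces of `M`, compare the first piece `A` of `L` with the first piece `C`
of `M`: either the rest of `L` still concatenates to a suffix of the rest of `M`, or `C`
contains `A` followed by the first letter of the next piece of `L`. The latter contradicts
maximality when `C` occurs in `T`, and `A ≠ []` when `|C| = 1`; induction gives `|L| ≤ |M|`.
-/

namespace List

variable {α : Type*}

theorem suffix_or_append_take_one_infix {A Z C Y : List α} (h : A ++ Z <:+ C ++ Y) :
    Z <:+ Y ∨ A ++ Z.take 1 <:+: C := by
  obtain ⟨s, hs⟩ := h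
  have hlen := congrArg length hs
  simp only [length_append] at hlen
  by_cases hC : C.length ≤ s.length + A.length
  · refine .inl (suffix_of_suffix_length_le ?_ (suffix_append C Y) (by omega))
    exact (suffix_append A Z).trans ⟨s, hs⟩
  · right
    have htake : s ++ (A ++ Z.take 1) = C.take (s.length + A.length + 1) := by
      rw [← take_append_of_le_length (l₂ := Y) (i := s.length + A.length + 1) (by omega), ← hs,
        add_assoc, take_length_add_append, take_length_add_append]
    exact (suffix_append s _).isInfix.trans (htake ▸ take_prefix _ C).isInfix

end List

section

open List

variable {α : Type*}

def IsMaximalPartition (T : List α) (L : List (List α)) : Prop :=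
  L.IsChain fun A B => ¬ A ++ B.take 1 <:+: T

theorem IsMaximalPartition.length_le_of_flatten_suffix {T : List α} :
    ∀ {L M : List (List α)}, IsMaximalPartition T L → (∀ A ∈ L, A ≠ []) →
      (∀ C ∈ M, C <:+: T ∨ C.length = 1) → L.flatten <:+ M.flatten → L.length ≤ M.length
  | [], _, _, _, _, _ => Nat.zero_le _
  | A :: L, [], _, hne, _, h => by
    simpa [hne A mem_cons_self] using eq_nil_of_suffix_nil h
  | A :: L, C :: M, hmax, hne, hocc, h => by
    have hL : IsMaximalPartition T L := hmax.tail
    have hLne : ∀ B ∈ L, B ≠ [] := fun B hB => hne B (mem_cons_of_mem A hB)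
    rcases suffix_or_append_take_one_infix (Z := L.flatten) (Y := M.flatten) h with hsuf | hinf
    · simpa using hL.length_le_of_flatten_suffix hLne
        (fun C' hC' => hocc C' (mem_cons_of_mem C hC')) hsuf
    · obtain _ | ⟨B, L'⟩ := L
      · simp
      have htakeB : B.take 1 = (B ++ L'.flatten).take 1 :=
        (take_append_of_le_length (length_pos_of_ne_nil (hLne B mem_cons_self))).symm
      rw [flatten_cons, ← htakeB] at hinf
      rcases hocc C mem_cons_self with hCT | hC1
      · exact absurd (hinf.trans hCT) (isChain_cons_cons.mp hmax).1
      · have hlen := hinf.length_le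
        have hA := length_pos_of_ne_nil (hne A mem_cons_self)
        have hB := length_pos_of_ne_nil (hLne B mem_cons_self)
        simp only [length_append, length_take] at hlen
        omega

end

theorem stmt11_general {α : Type*} (T P : List α) (L : List (List α))
    (hjoin : L.flatten = P) (hne : ∀ Q ∈ L, Q ≠ [])
    (hgreedy : ∀ i : ℕ, (h : i + 1 < L.length) →
      ¬ ((L.get ⟨i, Nat.lt_of_succ_lt h⟩ ++ (L.get ⟨i + 1, h⟩).take 1) <:+: T))
    (M : List (List α)) (hMjoin : M.flatten = P)
    (hMocc : ∀ Q ∈ M, Q <:+: T ∨ Q.length = 1) :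
    L.length ≤ M.length := by
  have hmax : IsMaximalPartition T L := List.isChain_iff_getElem.mpr hgreedy
  exact hmax.length_le_of_flatten_suffix hne hMocc (hjoin ▸ hMjoin ▸ List.suffix_refl P)

theorem stmt11 {α : Type*} (T P : List α) (hP : P ≠ []) (L : List (List α))
    (hjoin : L.flatten = P) (hne : ∀ Q ∈ L, Q ≠ [])
    (hocc : ∀ Q ∈ L, Q <:+: T ∨ Q.length = 1)
    (hgreedy : ∀ i : ℕ, (h : i + 1 < L.length) →
      ¬ ((L.get ⟨i, Nat.lt_of_succ_lt h⟩ ++ (L.get ⟨i + 1, h⟩).take 1) <:+: T))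
    (M : List (List α)) (hMjoin : M.flatten = P) (hMne : ∀ Q ∈ M, Q ≠ [])
    (hMocc : ∀ Q ∈ M, Q <:+: T ∨ Q.length = 1) :
    L.length ≤ M.length :=
  stmt11_general T P L hjoin hne hgreedy M hMjoin hMocc
end

section
/- Greedy exchange lemma for occurrence partitions: let T be a text and P a pattern, and suppose (Q₁, …, Q_m) is a sequence of nonempty strings concatenating to P such that each Q_i occurs in T or has length 1. If P₁ is the longest prefix of P that occurs in T (with |P₁| ≥ |Q₁|), then there exists a sequence (P₁, Q₂', …, Q_m') of at most m nonempty strings concatenating to P, each occurring in T or of length 1, whose first element is P₁. -/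
/-!
Since `|P₁| ≥ |Q₁|`, the rest of `P` after `P₁` is obtained from `Q₂ ⋯ Q_m` by dropping some
initial characters: whole pieces disappear and at most one piece is shortened from the left.
A nonempty suffix of a piece occurring in `T` occurs in `T`, and a nonempty suffix of a letter
is that letter, so the remaining pieces are still admissible.
-/

namespace List

variable {α : Type*}

theorem exists_flatten_eq_drop_of_suffix_closed {p : List α → Prop}
    (hp : ∀ q s, s ≠ [] → s <:+ q → p q → p s) :
    ∀ (Q : List (List α)) (k : ℕ), (∀ q ∈ Q, q ≠ [] ∧ p q) →
      ∃ R : List (List α), R.length ≤ Q.length ∧ R.flatten = Q.flatten.drop k ∧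
        ∀ r ∈ R, r ≠ [] ∧ p r
  | [], _, _ => ⟨[], by simp⟩
  | q :: Q, k, hQ => by
    rw [forall_mem_cons] at hQ
    by_cases hk : q.length ≤ k
    · obtain ⟨R, hlen, hflat, hR⟩ :=
        exists_flatten_eq_drop_of_suffix_closed hp Q (k - q.length) hQ.2
      refine ⟨R, hlen.trans (Nat.le_succ _), ?_, hR⟩
      rw [hflat, flatten_cons, drop_append, drop_eq_nil_of_le hk, nil_append]
    · have hdrop : q.drop k ≠ [] := by simp only [ne_eq, drop_eq_nil_iff, not_le]; omega
      refine ⟨q.drop k :: Q, by simp, ?_, ?_⟩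
      · rw [flatten_cons, flatten_cons, drop_append_of_le_length (by omega)]
      · exact forall_mem_cons.2 ⟨⟨hdrop, hp q _ hdrop (drop_suffix k q) hQ.1.2⟩, hQ.2⟩

theorem IsSuffix.infix_or_length_eq_one {s q T : List α} (hs : s ≠ []) (hsq : s <:+ q)
    (hq : q <:+: T ∨ q.length = 1) : s <:+: T ∨ s.length = 1 := by
  refine hq.imp hsq.isInfix.trans fun h => ?_
  have := hsq.length_le
  have := length_pos_iff.2 hs
  omega

end List

open List in
theorem stmt12_general {α : Type*} (T P P₁ : List α) (Q : List (List α)) (hQ : Q ≠ [])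
    (hjoin : Q.flatten = P) (hne : ∀ q ∈ Q, q ≠ [])
    (hocc : ∀ q ∈ Q, q <:+: T ∨ q.length = 1)
    (hP1pre : P₁ <+: P) (hP1occ : P₁ <:+: T)
    (hge : (Q.head hQ).length ≤ P₁.length) :
    ∃ R : List (List α), (P₁ :: R).length ≤ Q.length ∧ (P₁ :: R).flatten = P ∧
      (∀ q ∈ P₁ :: R, q ≠ []) ∧ (∀ q ∈ P₁ :: R, q <:+: T ∨ q.length = 1) := by
  obtain ⟨q₀, Qt, rfl⟩ := exists_cons_of_ne_nil hQ
  rw [head_cons] at hge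
  have hq₀ : q₀ ≠ [] := hne q₀ mem_cons_self
  have hP₁ : P₁ ≠ [] := fun h => hq₀ (length_eq_zero_iff.1 (by simpa [h] using hge))
  obtain ⟨R, hlen, hflat, hR⟩ :=
    exists_flatten_eq_drop_of_suffix_closed (p := fun q => q <:+: T ∨ q.length = 1)
      (fun _ _ => IsSuffix.infix_or_length_eq_one) Qt (P₁.length - q₀.length)
      fun q hq => ⟨hne q (mem_cons_of_mem _ hq), hocc q (mem_cons_of_mem _ hq)⟩
  have hrest : R.flatten = P.drop P₁.length := by
    rw [hflat, ← hjoin, flatten_cons, drop_append, drop_eq_nil_of_le hge, nil_append]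
  refine ⟨R, by simpa using hlen, ?_, ?_, ?_⟩
  · rw [flatten_cons, hrest, prefix_iff_eq_append.1 hP1pre]
  · exact forall_mem_cons.2 ⟨hP₁, fun r hr => (hR r hr).1⟩
  · exact forall_mem_cons.2 ⟨Or.inl hP1occ, fun r hr => (hR r hr).2⟩

theorem stmt12 {α : Type*} (T P P₁ : List α) (Q : List (List α)) (hQ : Q ≠ [])
    (hjoin : Q.flatten = P) (hne : ∀ q ∈ Q, q ≠ [])
    (hocc : ∀ q ∈ Q, q <:+: T ∨ q.length = 1)
    (hP1pre : P₁ <+: P) (hP1occ : P₁ <:+: T)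
    (hlongest : ∀ Q' : List α, Q' <+: P → Q' <:+: T → Q'.length ≤ P₁.length)
    (hge : (Q.head hQ).length ≤ P₁.length) :
    ∃ R : List (List α), (P₁ :: R).length ≤ Q.length ∧ (P₁ :: R).flatten = P ∧
      (∀ q ∈ P₁ :: R, q ≠ []) ∧ (∀ q ∈ P₁ :: R, q <:+: T ∨ q.length = 1) :=
  stmt12_general T P P₁ Q hQ hjoin hne hocc hP1pre hP1occ hge
end

section
/- Let T be a string with suffix array SA, let P occur in T with suffix range [ℓ, r), and let B be a nonempty string with suffix range [lb, rb). Define g(i) = ISA[SA[i] + |P|] when SA[i] + |P| < |T|. Then the predicate 'SA[i] + |P| = |T| or g(i) < lb' is monotone (downward-closed) on [ℓ, r): if it holds for some i ∈ [ℓ, r) it holds for all j ∈ [ℓ, i]. Hence the first index of the suffix range of P∘B within [ℓ, r) can be characterized as the least i ∈ [ℓ, r) failing this predicate. -/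
/-!
Inside the suffix range of `P` every suffix is `P` followed by its remainder, and cancelling the
common prefix `P` preserves the lexicographic order. So the rank `g i` of the remainder increases
with `i` on that range, and an empty remainder can only occur at its first index. Hence
"empty remainder or `g i < lb`" is downward closed there, and the first suffix starting with
`P ++ B` is the first one in the range of `P` whose remainder has rank in `[lb, rb)`.
-/

namespace List

variable {α : Type*}

theorem Lex.of_append_left {r : α → α → Prop} [Std.Irrefl r] :
    ∀ {s t₁ t₂ : List α}, Lex r (s ++ t₁) (s ++ t₂) → Lex r t₁ t₂
  | [], _, _, h => h
  | _ :: _, _, _, h => of_append_left (lex_cons_iff.mp h)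

theorem append_prefix_iff {s t l : List α} :
    s ++ t <+: l ↔ s <+: l ∧ t <+: l.drop s.length := by
  constructor
  · rintro ⟨u, rfl⟩
    exact ⟨(prefix_append s t).trans (prefix_append _ u), by simp⟩
  · rintro ⟨hs, ht⟩
    rw [prefix_append_drop hs]
    exact (prefix_append_right_inj s).2 ht

theorem drop_eq_append_drop_add_length_of_prefix {P T : List α} {k : ℕ} (h : P <+: T.drop k) :
    T.drop k = P ++ T.drop (k + P.length) := by
  rw [← drop_drop]
  exact prefix_append_drop h

theorem add_length_le_length_of_prefix {P T : List α} {k : ℕ} (h : P <+: T.drop k)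
    (hk : k ≤ T.length) : k + P.length ≤ T.length := by
  have := h.length_le
  rw [length_drop] at this
  omega

end List

namespace SuffixArray

variable {α : Type*} {T P B : List α} {SA : Equiv.Perm (Fin T.length)}
  {lb rb : ℕ} {i j : Fin T.length}

/-- `SA⁻¹ (SA i + m)` is the rank `g i` of the remainder of suffix `SA i` after `m` letters; an
empty remainder counts as lying below every rank. -/
def ShiftedRankLT (SA : Equiv.Perm (Fin T.length)) (m lb : ℕ) (i : Fin T.length) : Prop :=
  (SA i).val + m = T.length ∨
    ∃ h : (SA i).val + m < T.length, (SA.symm ⟨(SA i).val + m, h⟩).val < lb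

theorem not_shiftedRankLT_of_append_prefix (hB : B ≠ [])
    (hrangeB : ∀ i : Fin T.length, (B <+: T.drop (SA i).val) ↔ (lb ≤ i.val ∧ i.val < rb))
    (hPB : P ++ B <+: T.drop (SA i)) : ¬ ShiftedRankLT SA P.length lb i := by
  have hBi := (List.append_prefix_iff.mp hPB).2
  rw [List.drop_drop] at hBi
  have hlen := hBi.length_le
  rw [List.length_drop] at hlen
  have hBpos := List.length_pos_of_ne_nil hB
  rintro (hi | ⟨hi, hg⟩)
  · omega
  · have := (hrangeB _).mp (show B <+: T.drop (SA (SA.symm ⟨_, hi⟩)) by simpa using hBi)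
    omega

variable [LinearOrder α] (hsorted : StrictMono fun i => T.drop (SA i).val)
include hsorted

theorem drop_add_length_lt (hPi : P <+: T.drop (SA i)) (hPj : P <+: T.drop (SA j))
    (hji : j < i) : T.drop ((SA j).val + P.length) < T.drop ((SA i).val + P.length) := by
  have : T.drop (SA j) < T.drop (SA i) := hsorted hji
  rw [List.drop_eq_append_drop_add_length_of_prefix hPi,
    List.drop_eq_append_drop_add_length_of_prefix hPj] at this
  exact List.Lex.of_append_left this

theorem add_length_lt_length (hPi : P <+: T.drop (SA i)) (hPj : P <+: T.drop (SA j))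
    (hji : j < i) : (SA i).val + P.length < T.length := by
  refine (List.add_length_le_length_of_prefix hPi (SA i).isLt.le).lt_of_ne fun hi => ?_
  have := drop_add_length_lt hsorted hPi hPj hji
  rw [hi, List.drop_length] at this
  exact List.not_lt_nil _ this

theorem shiftedRank_lt (hPi : P <+: T.drop (SA i)) (hPj : P <+: T.drop (SA j)) (hji : j < i)
    (hi : (SA i).val + P.length < T.length) (hj : (SA j).val + P.length < T.length) :
    SA.symm ⟨(SA j).val + P.length, hj⟩ < SA.symm ⟨(SA i).val + P.length, hi⟩ :=
  hsorted.lt_iff_lt.mp (by simpa using drop_add_length_lt hsorted hPi hPj hji)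

theorem ShiftedRankLT.of_le (hPi : P <+: T.drop (SA i)) (hPj : P <+: T.drop (SA j))
    (hji : j ≤ i) (h : ShiftedRankLT SA P.length lb i) : ShiftedRankLT SA P.length lb j := by
  rcases hji.eq_or_lt with rfl | hji
  · exact h
  rcases (List.add_length_le_length_of_prefix hPj (SA j).isLt.le).eq_or_lt with hj | hj
  · exact .inl hj
  have hi := add_length_lt_length hsorted hPi hPj hji
  obtain hi' | ⟨_, hg⟩ := h
  · exact absurd hi' hi.ne
  exact .inr ⟨hj, (Fin.lt_def.mp (shiftedRank_lt hsorted hPi hPj hji hi hj)).trans hg⟩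

theorem shiftedRankLT_of_lt_of_isFirst
    (hrangeB : ∀ i : Fin T.length, (B <+: T.drop (SA i).val) ↔ (lb ≤ i.val ∧ i.val < rb))
    (hPj : P <+: T.drop (SA j)) (hPB : P ++ B <+: T.drop (SA i))
    (hfirst : ∀ k : Fin T.length, P ++ B <+: T.drop (SA k) → i ≤ k) (hji : j < i) :
    ShiftedRankLT SA P.length lb j := by
  obtain ⟨hPi, hBi⟩ := List.append_prefix_iff.mp hPB
  rw [List.drop_drop] at hBi
  rcases (List.add_length_le_length_of_prefix hPj (SA j).isLt.le).eq_or_lt with hj | hj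
  · exact .inl hj
  refine .inr ⟨hj, ?_⟩
  have hi := add_length_lt_length hsorted hPi hPj hji
  have hg := shiftedRank_lt hsorted hPi hPj hji hi hj
  have hgi := (hrangeB _).mp (show B <+: T.drop (SA (SA.symm ⟨_, hi⟩)) by simpa using hBi)
  by_contra! hlb
  have hBj : B <+: T.drop ((SA j).val + P.length) := by
    simpa using (hrangeB _).mpr ⟨hlb, (Fin.lt_def.mp hg).trans hgi.2⟩
  have hPBj : P ++ B <+: T.drop (SA j) :=
    List.append_prefix_iff.mpr ⟨hPj, by rwa [List.drop_drop]⟩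
  exact (hfirst j hPBj).not_gt hji

end SuffixArray

theorem stmt15 {α : Type*} [LinearOrder α] (T P B : List α) (hB : B ≠ [])
    (SA : Equiv.Perm (Fin T.length))
    (hsorted : ∀ i j : Fin T.length, i < j →
      List.Lex (· < ·) (T.drop (SA i).val) (T.drop (SA j).val))
    (ℓ r lb rb : ℕ)
    (hrangeP : ∀ i : Fin T.length,
      (P <+: T.drop (SA i).val) ↔ (ℓ ≤ i.val ∧ i.val < r))
    (hrangeB : ∀ i : Fin T.length,
      (B <+: T.drop (SA i).val) ↔ (lb ≤ i.val ∧ i.val < rb)) :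
    (∀ i j : Fin T.length, ℓ ≤ j.val → j ≤ i → i.val < r →
      ((SA i).val + P.length = T.length ∨
        ∃ h : (SA i).val + P.length < T.length,
          (SA.symm ⟨(SA i).val + P.length, h⟩).val < lb) →
      ((SA j).val + P.length = T.length ∨
        ∃ h : (SA j).val + P.length < T.length,
          (SA.symm ⟨(SA j).val + P.length, h⟩).val < lb)) ∧
    (∀ i : Fin T.length, ((P ++ B) <+: T.drop (SA i).val) →
      (∀ j : Fin T.length, ((P ++ B) <+: T.drop (SA j).val) → i ≤ j) →
      ℓ ≤ i.val ∧ i.val < r ∧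
      ¬ ((SA i).val + P.length = T.length ∨
          ∃ h : (SA i).val + P.length < T.length,
            (SA.symm ⟨(SA i).val + P.length, h⟩).val < lb) ∧
      ∀ j : Fin T.length, ℓ ≤ j.val → j.val < i.val →
        ((SA j).val + P.length = T.length ∨
          ∃ h : (SA j).val + P.length < T.length,
            (SA.symm ⟨(SA j).val + P.length, h⟩).val < lb)) := by
  have hmono : StrictMono fun i => T.drop (SA i).val := fun i j => hsorted i j
  refine ⟨fun i j hℓj hji hir => SuffixArray.ShiftedRankLT.of_le hmono
    ((hrangeP i).2 ⟨hℓj.trans hji, hir⟩)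
    ((hrangeP j).2 ⟨hℓj, (Fin.le_def.mp hji).trans_lt hir⟩) hji, fun i hPB hfirst => ?_⟩
  obtain ⟨hℓi, hir⟩ := (hrangeP i).1 (List.append_prefix_iff.mp hPB).1
  exact ⟨hℓi, hir, SuffixArray.not_shiftedRankLT_of_append_prefix hB hrangeB hPB,
    fun j hℓj hji => SuffixArray.shiftedRankLT_of_lt_of_isFirst hmono hrangeB
      ((hrangeP j).2 ⟨hℓj, hji.trans hir⟩) hPB hfirst hji⟩
end

section
/- Let T be a text and (P₁, …, P_k) an occurrence partition of P with respect to T (with k ≥ 2 where relevant). Suppose P_i is replaced by at most three nonempty strings Q₁, Q₂, Q₃ each occurring in T or of length 1 (character insertion/deletion inside P_i). Then the resulting sequence can be restored to an occurrence partition (satisfying maximality) by merging at most 4 adjacent pairs: specifically, no merge can involve P_{i-2} with P_{i-1}∘X for any X, nor X∘P_{i+1} with P_{i+2}, because P_{i-2}∘P_{i-1} and P_{i+1}∘P_{i+2} do not occur in T. -/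
def Unjoinable {α : Type*} (T a b : List α) : Prop := ¬ (a ++ b) <:+: T

theorem Unjoinable.append_append {α : Type*} {T a b : List α} (h : Unjoinable T a b)
    (s t : List α) : Unjoinable T (s ++ a) (b ++ t) :=
  fun hT => h <| (List.infix_append s (a ++ b) t).trans (by simpa using hT)

open Classical in
noncomputable def greedyMerge {α : Type*} (T : List α) : List (List α) → List (List α)
  | [] => []
  | [a] => [a]
  | a :: b :: rest =>
    if (a ++ b) <:+: T then greedyMerge T ((a ++ b) :: rest)
    else a :: greedyMerge T (b :: rest)
termination_by l => l.length

section
variable {α : Type*} (T : List α)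

@[simp] theorem greedyMerge_nil : greedyMerge T [] = [] := by rw [greedyMerge]

theorem flatten_greedyMerge (l : List (List α)) : (greedyMerge T l).flatten = l.flatten := by
  fun_induction greedyMerge T l <;> simp_all

theorem head?_greedyMerge (l : List (List α)) :
    ∃ s, (greedyMerge T l).head? = l.head?.map (· ++ s) := by
  fun_induction greedyMerge T l with
  | case1 => exact ⟨[], rfl⟩
  | case2 a => exact ⟨[], by simp⟩
  | case3 a b rest _ ih =>
    obtain ⟨s, hs⟩ := ih
    exact ⟨b ++ s, by simp [hs]⟩
  | case4 => exact ⟨[], by simp⟩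

theorem getLast?_greedyMerge (l : List (List α)) :
    ∃ s, (greedyMerge T l).getLast? = l.getLast?.map (s ++ ·) := by
  fun_induction greedyMerge T l with
  | case1 => exact ⟨[], rfl⟩
  | case2 a => exact ⟨[], by simp⟩
  | case3 a b rest _ ih =>
    obtain ⟨s, hs⟩ := ih
    cases rest with
    | nil => exact ⟨s ++ a, by simp_all⟩
    | cons c rest => exact ⟨s, by simp_all [List.getLast?_cons_cons]⟩
  | case4 a b rest _ ih =>
    obtain ⟨s, hs⟩ := ih
    refine ⟨s, ?_⟩
    rw [List.getLast?_cons, hs, List.getLast?_cons_cons]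
    simp [List.getLast?_cons]

theorem greedyMerge_eq_nil_iff (l : List (List α)) : greedyMerge T l = [] ↔ l = [] := by
  obtain ⟨s, hs⟩ := head?_greedyMerge T l
  rw [← List.head?_eq_none_iff, hs, Option.map_eq_none_iff, List.head?_eq_none_iff]

theorem exists_prefix_of_mem_greedyMerge {l : List (List α)} {Q : List α}
    (hQ : Q ∈ greedyMerge T l) : ∃ a ∈ l, a <+: Q := by
  fun_induction greedyMerge T l with
  | case1 => simp at hQ
  | case2 a => exact ⟨a, by simp_all⟩
  | case3 a b rest _ ih =>
    obtain ⟨c, hc, hcQ⟩ := ih hQ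
    rcases List.mem_cons.mp hc with rfl | hc
    · exact ⟨a, by simp, (List.prefix_append a b).trans hcQ⟩
    · exact ⟨c, by simp [hc], hcQ⟩
  | case4 a b rest _ ih =>
    rcases List.mem_cons.mp hQ with rfl | hQ
    · exact ⟨Q, by simp, List.prefix_rfl⟩
    · obtain ⟨c, hc, hcQ⟩ := ih hQ
      exact ⟨c, by simp_all, hcQ⟩

theorem mem_or_infix_of_mem_greedyMerge {l : List (List α)} {Q : List α}
    (hQ : Q ∈ greedyMerge T l) : Q ∈ l ∨ Q <:+: T := by
  fun_induction greedyMerge T l with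
  | case1 => simp at hQ
  | case2 a => simp_all
  | case3 a b rest hab ih =>
    rcases ih hQ with hQ | hQ
    · rcases List.mem_cons.mp hQ with rfl | hQ
      · exact .inr hab
      · simp [hQ]
    · exact .inr hQ
  | case4 a b rest _ ih =>
    rcases List.mem_cons.mp hQ with rfl | hQ
    · simp
    · rcases ih hQ with hQ | hQ <;> simp [hQ]

theorem isChain_greedyMerge (l : List (List α)) : (greedyMerge T l).IsChain (Unjoinable T) := by
  fun_induction greedyMerge T l with
  | case1 => simp
  | case2 a => simp
  | case3 => assumption
  | case4 a b rest hab ih =>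
    refine List.isChain_cons.mpr ⟨fun y hy => ?_, ih⟩
    obtain ⟨s, hs⟩ := head?_greedyMerge T (b :: rest)
    obtain rfl : b ++ s = y := by simpa [hs] using hy
    simpa using Unjoinable.append_append hab [] s
end

namespace List
variable {β : Type*} {R : β → β → Prop}

theorem isChain_of_getElem_of_eq_append {L l₁ l₂ l₃ : List β} (hL : L = l₁ ++ l₂ ++ l₃)
    (h : ∀ i (hi : i + 1 < L.length), l₁.length ≤ i → i + 1 < l₁.length + l₂.length →
      R L[i] L[i + 1]) : l₂.IsChain R := by
  subst hL
  refine isChain_iff_getElem.mpr fun j hj => ?_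
  have := h (l₁.length + j) (by simp only [length_append]; omega) (by omega)
    (by omega)
  simpa [Nat.add_assoc, getElem_append_left hj, getElem_append_left (Nat.lt_of_succ_lt hj)]
    using this

theorem IsChain.splice {pre w suf : List β} {a z a' z' : β}
    (hpre : (pre ++ [a]).IsChain R) (hsuf : (z :: suf).IsChain R) (hw : w.IsChain R)
    (hhead : w.head? = some a') (hlast : w.getLast? = some z')
    (ha : ∀ x, R x a → R x a') (hz : ∀ y, R z y → R z' y) :
    (pre ++ w ++ suf).IsChain R := by
  have hw_ne : w ≠ [] := by rintro rfl; simp at hhead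
  refine (IsChain.append ?_ (List.isChain_cons.mp hsuf).2 ?_)
  · refine hpre.infix (prefix_append pre [a]).isInfix |>.append hw fun x hx y hy => ?_
    obtain rfl : a' = y := by simpa [hhead] using hy
    exact ha x ((isChain_append.mp hpre).2.2 x hx a (by simp))
  · intro x hx y hy
    obtain rfl : z' = x := by simpa [getLast?_append_of_ne_nil _ hw_ne, hlast] using hx
    exact hz y ((List.isChain_cons.mp hsuf).1 y hy)

end List

section
variable {α : Type*} {T : List α}

theorem isOccPartition_iff {L : List (List α)} :
    IsOccPartition T L ↔ (∀ Q ∈ L, Q ≠ []) ∧ (∀ Q ∈ L, Q <:+: T ∨ Q.length = 1) ∧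
      L.IsChain (Unjoinable T) := by
  simp only [IsOccPartition, List.isChain_iff_getElem, Unjoinable, List.get_eq_getElem]

theorem isChain_append_greedyMerge_append {pre w suf : List (List α)}
    (hmax : ∀ i (h : i + 1 < (pre ++ w ++ suf).length),
      ¬ (pre.length ≤ i ∧ i + 1 < pre.length + w.length) →
      Unjoinable T (pre ++ w ++ suf)[i] (pre ++ w ++ suf)[i + 1]) :
    (pre ++ greedyMerge T w ++ suf).IsChain (Unjoinable T) := by
  rcases w.eq_nil_or_concat with rfl | ⟨init, z, rfl⟩
  · simpa using List.isChain_of_getElem_of_eq_append (l₁ := []) (l₃ := []) (by simp)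
      fun i hi _ _ => hmax i hi (by simp only [List.length_nil]; omega)
  rw [List.concat_eq_append] at hmax ⊢
  obtain ⟨a, ha⟩ : ∃ a, (init ++ [z]).head? = some a := by
    cases init <;> simp
  have hpre : (pre ++ [a]).IsChain (Unjoinable T) :=
    List.isChain_of_getElem_of_eq_append (l₁ := []) (l₃ := (init ++ [z]).tail ++ suf)
      (by rw [← List.cons_head?_tail ha]; simp)
      fun i hi _ hi' => hmax i hi <| by
        simp only [List.length_append, List.length_cons, List.length_nil] at hi'; omega
  have hsuf : (z :: suf).IsChain (Unjoinable T) :=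
    List.isChain_of_getElem_of_eq_append (l₁ := pre ++ init) (l₃ := []) (by simp)
      fun i hi hi' _ => hmax i hi <| by
        simp only [List.length_append, List.length_cons, List.length_nil] at hi' ⊢; omega
  obtain ⟨s, hs⟩ := head?_greedyMerge T (init ++ [z])
  obtain ⟨t, ht⟩ := getLast?_greedyMerge T (init ++ [z])
  rw [ha, Option.map_some] at hs
  rw [List.getLast?_concat, Option.map_some] at ht
  exact hpre.splice hsuf (isChain_greedyMerge T _) hs ht
    (fun x h => by simpa using h.append_append [] s)
    (fun y h => by simpa using h.append_append t [])
end

theorem stmt16 {α : Type*} (T : List α) (pre w suf : List (List α))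
    (hw : w.length ≤ 5)
    (hne : ∀ Q ∈ pre ++ w ++ suf, Q ≠ [])
    (hocc : ∀ Q ∈ pre ++ w ++ suf, Q <:+: T ∨ Q.length = 1)
    (hmax : ∀ i : ℕ, (h : i + 1 < (pre ++ w ++ suf).length) →
      ¬ (pre.length ≤ i ∧ i + 1 < pre.length + w.length) →
      ¬ (((pre ++ w ++ suf).get ⟨i, Nat.lt_of_succ_lt h⟩ ++
          (pre ++ w ++ suf).get ⟨i + 1, h⟩) <:+: T)) :
    ∃ w' : List (List α), w'.flatten = w.flatten ∧ w.length - 4 ≤ w'.length ∧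
      IsOccPartition T (pre ++ w' ++ suf) := by
  refine ⟨greedyMerge T w, flatten_greedyMerge T w, ?_, isOccPartition_iff.mpr ⟨?_, ?_, ?_⟩⟩
  · rcases eq_or_ne w [] with rfl | hw₀
    · simp
    · have := List.length_pos_of_ne_nil ((greedyMerge_eq_nil_iff T w).not.mpr hw₀)
      omega
  · simp only [List.mem_append]
    rintro Q ((hQ | hQ) | hQ)
    · exact hne Q (by simp [hQ])
    · obtain ⟨a, ha, haQ⟩ := exists_prefix_of_mem_greedyMerge T hQ
      rintro rfl
      exact hne a (by simp [ha]) (List.prefix_nil.mp haQ)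
    · exact hne Q (by simp [hQ])
  · simp only [List.mem_append]
    rintro Q ((hQ | hQ) | hQ)
    · exact hocc Q (by simp [hQ])
    · rcases mem_or_infix_of_mem_greedyMerge T hQ with hQ | hQ
      · exact hocc Q (by simp [hQ])
      · exact .inl hQ
    · exact hocc Q (by simp [hQ])
  · exact isChain_append_greedyMerge_append hmax
end

section
/- Monotonicity for the suffix-range binary search: let T have suffix array SA and let P be a nonempty pattern. The predicate 'T_{SA[m]} ≺ P restricted to |P| characters' (i.e., the length-|P| truncation of T_{SA[m]} is lexicographically smaller than P) is downward-closed in m, and the predicate 'P is lexicographically at most the length-|P| truncation of T_{SA[m]}' is upward-closed in m. Hence the suffix range of P is [ℓ, r) where ℓ is the least m with P ≼ truncation and r is the least m with the truncation strictly greater than P (or |T|). -/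
private lemma take_lex_le {α : Type*} [LinearOrder α] {u v : List α}
    (h : List.Lex (· < ·) u v) (k : ℕ) :
    u.take k = v.take k ∨ List.Lex (· < ·) (u.take k) (v.take k) := by
  induction h generalizing k with
  | nil =>
    cases k with
    | zero => left; rfl
    | succ k => right; exact List.Lex.nil
  | @cons a l1 l2 _ ih =>
    cases k with
    | zero => left; rfl
    | succ k =>
      rcases ih k with h' | h'
      · left; simp [h']
      · right; exact List.Lex.cons h'
  | rel hab =>
    cases k with
    | zero => left; rfl
    | succ k => right; exact List.Lex.rel hab

private lemma lex_iff_lt {α : Type*} [LinearOrder α] (u v : List α) :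
    List.Lex (· < ·) u v ↔ u < v := Iff.rfl

theorem stmt18 {α : Type*} [LinearOrder α] (T P : List α) (hP : P ≠ [])
    (SA : Equiv.Perm (Fin T.length))
    (hsorted : ∀ i j : Fin T.length, i < j →
      List.Lex (· < ·) (T.drop (SA i).val) (T.drop (SA j).val)) :
    (∀ m m' : Fin T.length, m' ≤ m →
      List.Lex (· < ·) ((T.drop (SA m).val).take P.length) P →
      List.Lex (· < ·) ((T.drop (SA m').val).take P.length) P) ∧
    (∀ m m' : Fin T.length, m ≤ m' →
      ((T.drop (SA m).val).take P.length = P ∨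
        List.Lex (· < ·) P ((T.drop (SA m).val).take P.length)) →
      ((T.drop (SA m').val).take P.length = P ∨
        List.Lex (· < ·) P ((T.drop (SA m').val).take P.length))) ∧
    (∀ i : Fin T.length, (P <+: T.drop (SA i).val) ↔
      (sInf ({m : ℕ | ∃ h : m < T.length,
          ((T.drop (SA ⟨m, h⟩).val).take P.length = P ∨
            List.Lex (· < ·) P ((T.drop (SA ⟨m, h⟩).val).take P.length))} ∪
          {T.length}) ≤ i.val ∧
       i.val < sInf ({m : ℕ | ∃ h : m < T.length,
          List.Lex (· < ·) P ((T.drop (SA ⟨m, h⟩).val).take P.length)} ∪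
          {T.length}))) := by
  have smono : ∀ m m' : Fin T.length, m ≤ m' →
      (T.drop (SA m).val).take P.length ≤ (T.drop (SA m').val).take P.length := by
    intro m m' hmm'
    rcases eq_or_lt_of_le hmm' with rfl | hlt
    · exact le_rfl
    · have h := hsorted m m' hlt
      rcases take_lex_le h P.length with h' | h'
      · exact le_of_eq h'
      · exact le_of_lt ((lex_iff_lt _ _).mp h')
  have down : ∀ m m' : Fin T.length, m' ≤ m →
      List.Lex (· < ·) ((T.drop (SA m).val).take P.length) P →
      List.Lex (· < ·) ((T.drop (SA m').val).take P.length) P := by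
    intro m m' h hlex
    rw [lex_iff_lt] at hlex ⊢
    exact lt_of_le_of_lt (smono m' m h) hlex
  have upP : ∀ m m' : Fin T.length, m ≤ m' →
      ((T.drop (SA m).val).take P.length = P ∨
        List.Lex (· < ·) P ((T.drop (SA m).val).take P.length)) →
      ((T.drop (SA m').val).take P.length = P ∨
        List.Lex (· < ·) P ((T.drop (SA m').val).take P.length)) := by
    intro m m' h hm
    have h1 : P ≤ (T.drop (SA m).val).take P.length := by
      rcases hm with h' | h'
      · exact le_of_eq h'.symm
      · exact le_of_lt ((lex_iff_lt _ _).mp h')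
    have h2 : P ≤ (T.drop (SA m').val).take P.length := le_trans h1 (smono m m' h)
    rcases eq_or_lt_of_le h2 with h' | h'
    · exact Or.inl h'.symm
    · exact Or.inr ((lex_iff_lt _ _).mpr h')
  refine ⟨down, upP, ?_⟩
  intro i
  have hBne : (({m : ℕ | ∃ h : m < T.length,
      ((T.drop (SA ⟨m, h⟩).val).take P.length = P ∨
        List.Lex (· < ·) P ((T.drop (SA ⟨m, h⟩).val).take P.length))} ∪
      {T.length}) : Set ℕ).Nonempty := ⟨T.length, Or.inr rfl⟩
  have hCne : (({m : ℕ | ∃ h : m < T.length,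
      List.Lex (· < ·) P ((T.drop (SA ⟨m, h⟩).val).take P.length)} ∪
      {T.length}) : Set ℕ).Nonempty := ⟨T.length, Or.inr rfl⟩
  have hpref : (P <+: T.drop (SA i).val) ↔ (T.drop (SA i).val).take P.length = P := by
    rw [List.prefix_iff_eq_take]
    exact ⟨fun h => h.symm, fun h => h.symm⟩
  rw [hpref]
  constructor
  · intro hsi
    constructor
    · exact Nat.sInf_le (Or.inl ⟨i.isLt, Or.inl hsi⟩)
    · by_contra hcon
      push_neg at hcon
      rcases Nat.sInf_mem hCne with hr | hr
      · obtain ⟨hlt, hlex⟩ := hr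
        have hle : (⟨_, hlt⟩ : Fin T.length) ≤ i := hcon
        have hPlt : P < (T.drop (SA i).val).take P.length :=
          lt_of_lt_of_le ((lex_iff_lt _ _).mp hlex) (smono ⟨_, hlt⟩ i hle)
        rw [hsi] at hPlt
        exact lt_irrefl P hPlt
      · simp only [Set.mem_singleton_iff] at hr
        have := i.isLt
        omega
  · rintro ⟨hl, hr⟩
    rcases Nat.sInf_mem hBne with hm | hm
    · obtain ⟨hlt, hB'⟩ := hm
      have hle : (⟨_, hlt⟩ : Fin T.length) ≤ i := hl
      rcases upP ⟨_, hlt⟩ i hle hB' with h' | h'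
      · exact h'
      · exfalso
        have : sInf ({m : ℕ | ∃ h : m < T.length,
            List.Lex (· < ·) P ((T.drop (SA ⟨m, h⟩).val).take P.length)} ∪
            {T.length}) ≤ i.val := Nat.sInf_le (Or.inl ⟨i.isLt, h'⟩)
        omega
    · simp only [Set.mem_singleton_iff] at hm
      have := i.isLt
      omega
end
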